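/- If a pattern P ⊆ ℕ×ℕ has at most n entries in each row, then every matrix S with entries bounded by 1 in modulus and supported on P has Schur multiplier norm at most √n. -/

import Mathlib

open scoped ENNReal ComplexOrder

noncomputable def opNorm2 {m : Type*} [Fintype m] [DecidableEq m] (M : Matrix m m ℂ) : ℝ :=
  ‖Matrix.toEuclideanCLM (𝕜 := ℂ) M‖

noncomputable def schurNorm {m : Type*} [Fintype m] [DecidableEq m] (M : Matrix m m ℂ) : ℝ :=
  ⨆ X : {X : Matrix m m ℂ // opNorm2 X ≤ 1}, opNorm2 (M.hadamard X.1)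

noncomputable def schurNormENN (A : ℕ → ℕ → ℂ) : ℝ≥0∞ :=
  ⨆ n : ℕ, ENNReal.ofReal (schurNorm (Matrix.of fun i j : Fin n => A i j))

noncomputable def schurBound (P : Set (ℕ × ℕ)) : ℝ≥0∞ :=
  ⨆ S : {S : ℕ → ℕ → ℂ //
      (∀ i j, ‖S i j‖ ≤ 1) ∧ ∀ i j, (i, j) ∉ P → S i j = 0},
    schurNormENN S.1

noncomputable def matAbs {m : Type*} [Fintype m] [DecidableEq m] (T : Matrix m m ℂ) :
    Matrix m m ℂ :=
  ((Matrix.isHermitian_conjTranspose_mul_self T).eigenvectorUnitary : Matrix m m ℂ) *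
    Matrix.diagonal ((↑) ∘ (√·) ∘ (Matrix.isHermitian_conjTranspose_mul_self T).eigenvalues) *
    (star (Matrix.isHermitian_conjTranspose_mul_self T).eigenvectorUnitary : Matrix m m ℂ)

/-!
A matrix whose rows have `ℓ²`-norm at most `√C` is a Schur multiplier of norm at most `√C`:
this is the factorisation `m i j = ⟪x i, e j⟫` with `x i` the conjugated `i`-th row. Concretely,
with `w j = (conj (m i j) * u i)ᵢ` one has `⟪u, (m ⊙ X) v⟫ = ∑ j ⟪w j, X (v j • e j)⟫`, and
Cauchy–Schwarz together with `∑ j ‖w j‖² ≤ C ‖u‖²` bounds this by `√C ‖X‖ ‖u‖ ‖v‖`. A matrix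
bounded by `1` and supported on a pattern with at most `n` entries per row has rows of `ℓ²`-norm
at most `√n`.
-/

open Matrix ComplexConjugate WithLp

section SchurMultiplier

variable {ι : Type*} [Fintype ι]

lemma sum_norm_sq_conj_mul_le (M : Matrix ι ι ℂ) {C : ℝ} (hrow : ∀ i, ∑ j, ‖M i j‖ ^ 2 ≤ C)
    (u : EuclideanSpace ℂ ι) :
    ∑ j, ‖(toLp 2 fun i => conj (M i j) * u i : EuclideanSpace ℂ ι)‖ ^ 2 ≤ C * ‖u‖ ^ 2 := by
  simp only [EuclideanSpace.norm_sq_eq, norm_mul, RCLike.norm_conj, mul_pow]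
  rw [Finset.sum_comm, Finset.mul_sum]
  exact Finset.sum_le_sum fun i _ => by
    rw [← Finset.sum_mul]; exact mul_le_mul_of_nonneg_right (hrow i) (by positivity)

variable [DecidableEq ι]

lemma toEuclideanCLM_apply_apply (A : Matrix ι ι ℂ) (x : EuclideanSpace ℂ ι) (i : ι) :
    toEuclideanCLM (𝕜 := ℂ) A x i = ∑ j, A i j * x j :=
  rfl

lemma toEuclideanCLM_single_apply (A : Matrix ι ι ℂ) (j : ι) (a : ℂ) (i : ι) :
    toEuclideanCLM (𝕜 := ℂ) A (EuclideanSpace.single j a) i = A i j * a := by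
  simp [toEuclideanCLM_apply_apply]

lemma inner_toEuclideanCLM_hadamard (M X : Matrix ι ι ℂ) (u v : EuclideanSpace ℂ ι) :
    inner ℂ u (toEuclideanCLM (𝕜 := ℂ) (M ⊙ X) v) =
      ∑ j, inner ℂ (toLp 2 fun i => conj (M i j) * u i)
        (toEuclideanCLM (𝕜 := ℂ) X (EuclideanSpace.single j (v j))) := by
  simp only [PiLp.inner_apply, RCLike.inner_apply, toEuclideanCLM_single_apply]
  simp only [toEuclideanCLM_apply_apply, hadamard_apply, Finset.sum_mul]
  rw [Finset.sum_comm]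
  refine Finset.sum_congr rfl fun j _ => Finset.sum_congr rfl fun i _ => ?_
  simp only [map_mul, RingHomCompTriple.comp_apply, RingHom.id_apply]
  ring

lemma norm_inner_toEuclideanCLM_hadamard_le (M X : Matrix ι ι ℂ) {C : ℝ}
    (hrow : ∀ i, ∑ j, ‖M i j‖ ^ 2 ≤ C) (u v : EuclideanSpace ℂ ι) :
    ‖inner ℂ u (toEuclideanCLM (𝕜 := ℂ) (M ⊙ X) v)‖ ≤
      √C * ‖toEuclideanCLM (𝕜 := ℂ) X‖ * (‖u‖ * ‖v‖) := by
  set w : ι → EuclideanSpace ℂ ι := fun j => toLp 2 fun i => conj (M i j) * u i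
  have hX (j : ι) : ‖toEuclideanCLM (𝕜 := ℂ) X (EuclideanSpace.single j (v j))‖ ≤
      ‖toEuclideanCLM (𝕜 := ℂ) X‖ * ‖v j‖ := by
    simpa using (toEuclideanCLM (𝕜 := ℂ) X).le_opNorm (EuclideanSpace.single j (v j))
  calc ‖inner ℂ u (toEuclideanCLM (𝕜 := ℂ) (M ⊙ X) v)‖
      ≤ ∑ j, ‖w j‖ * (‖toEuclideanCLM (𝕜 := ℂ) X‖ * ‖v j‖) := by
        rw [inner_toEuclideanCLM_hadamard]
        refine (norm_sum_le _ _).trans (Finset.sum_le_sum fun j _ => ?_)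
        exact (norm_inner_le_norm _ _).trans (by gcongr; exact hX j)
    _ = ‖toEuclideanCLM (𝕜 := ℂ) X‖ * ∑ j, ‖w j‖ * ‖v j‖ := by
        rw [Finset.mul_sum]; exact Finset.sum_congr rfl fun j _ => by ring
    _ ≤ ‖toEuclideanCLM (𝕜 := ℂ) X‖ * (√(∑ j, ‖w j‖ ^ 2) * √(∑ j, ‖v j‖ ^ 2)) := by
        gcongr; exact Real.sum_mul_le_sqrt_mul_sqrt _ _ _
    _ ≤ ‖toEuclideanCLM (𝕜 := ℂ) X‖ * (√(C * ‖u‖ ^ 2) * ‖v‖) := by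
        rw [EuclideanSpace.norm_eq v]
        gcongr
        exact sum_norm_sq_conj_mul_le M hrow u
    _ = √C * ‖toEuclideanCLM (𝕜 := ℂ) X‖ * (‖u‖ * ‖v‖) := by
        rw [Real.sqrt_mul' _ (by positivity), Real.sqrt_sq (norm_nonneg u)]
        ring

lemma opNorm2_hadamard_le (M X : Matrix ι ι ℂ) {C : ℝ} (hrow : ∀ i, ∑ j, ‖M i j‖ ^ 2 ≤ C) :
    opNorm2 (M ⊙ X) ≤ √C * opNorm2 X := by
  refine ContinuousLinearMap.opNorm_le_of_re_inner_le (by unfold opNorm2; positivity)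
    fun v u hv hu => ?_
  calc RCLike.re (inner ℂ (toEuclideanCLM (𝕜 := ℂ) (M ⊙ X) v) u)
      ≤ ‖inner ℂ u (toEuclideanCLM (𝕜 := ℂ) (M ⊙ X) v)‖ :=
        (RCLike.re_le_norm _).trans (norm_inner_symm _ _).le
    _ ≤ √C * opNorm2 X := by
        simpa [opNorm2, hu, hv] using norm_inner_toEuclideanCLM_hadamard_le M X hrow u v

lemma schurNorm_le_sqrt (M : Matrix ι ι ℂ) {C : ℝ} (hrow : ∀ i, ∑ j, ‖M i j‖ ^ 2 ≤ C) :
    schurNorm M ≤ √C :=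
  Real.iSup_le (fun X => (opNorm2_hadamard_le M X.1 hrow).trans
    (mul_le_of_le_one_right (Real.sqrt_nonneg C) X.2)) (Real.sqrt_nonneg C)

end SchurMultiplier

lemma sum_norm_sq_le_of_row_encard_le {P : Set (ℕ × ℕ)} {n : ℕ}
    (hP : ∀ i, {j | (i, j) ∈ P}.encard ≤ n) {S : ℕ → ℕ → ℂ} (hbd : ∀ i j, ‖S i j‖ ≤ 1)
    (hsupp : ∀ i j, (i, j) ∉ P → S i j = 0) (i : ℕ) (s : Finset ℕ) :
    ∑ j ∈ s, ‖S i j‖ ^ 2 ≤ n := by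
  classical
  set t := s.filter fun j => (i, j) ∈ P
  have ht : t.card ≤ n := by
    have : (t : Set ℕ).encard ≤ n :=
      (Set.encard_mono fun j hj => (Finset.mem_filter.mp hj).2).trans (hP i)
    rwa [Set.encard_coe_eq_coe_finsetCard, Nat.cast_le] at this
  have mem_of_ne_zero : ∀ j ∈ s, ‖S i j‖ ^ 2 ≠ 0 → (i, j) ∈ P := fun j _ hj => by
    by_contra hjP
    simp [hsupp i j hjP] at hj
  calc ∑ j ∈ s, ‖S i j‖ ^ 2 = ∑ j ∈ t, ‖S i j‖ ^ 2 := (Finset.sum_filter_of_ne mem_of_ne_zero).symm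
    _ ≤ t.card • (1 : ℝ) :=
        Finset.sum_le_card_nsmul _ _ _ fun j _ => pow_le_one₀ (norm_nonneg _) (hbd i j)
    _ ≤ n := by simpa using ht

theorem stmt_0 (P : Set (ℕ × ℕ)) (n : ℕ)
    (hP : ∀ i, {j | (i, j) ∈ P}.encard ≤ n)
    (S : ℕ → ℕ → ℂ)
    (hbd : ∀ i j, ‖S i j‖ ≤ 1)
    (hsupp : ∀ i j, (i, j) ∉ P → S i j = 0) :
    schurNormENN S ≤ ENNReal.ofReal (Real.sqrt n) := by
  refine iSup_le fun N => ENNReal.ofReal_le_ofReal (schurNorm_le_sqrt _ fun i => ?_)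
  simpa [Fin.sum_univ_eq_sum_range (fun j => ‖S i j‖ ^ 2)] using
    sum_norm_sq_le_of_row_encard_le hP hbd hsupp i (Finset.range N)
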